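/- arXiv:2209.15429 — 5 statements merged into one kernel-verified Lean document; each statement's English description precedes it below -/
import Mathlib

section
/- For all z in [1/2, 1), the function g(z) = 2z - 1 - 2(1 - 3z + 3z²)·log(z/(1-z)) is nonpositive. -/
/-!
With `t = 2z - 1 ∈ [0, 1)` we have `z / (1 - z) = (1 + t) / (1 - t)` and
`1 - 3z + 3z² = (1 + 3t²) / 4`, so `g(z) = t - (1 + 3t²)/2 · log((1 + t)/(1 - t))`.
The series `log((1 + t)/(1 - t)) = 2 ∑ t^(2k+1)/(2k+1)` has nonnegative terms, hence is at
least `2t`, and then `g(z) ≤ t - t(1 + 3t²) = -3t³ ≤ 0`.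
-/

open Real

lemma two_mul_le_log_one_add_div_one_sub {x : ℝ} (hx0 : 0 ≤ x) (hx1 : x < 1) :
    2 * x ≤ log ((1 + x) / (1 - x)) := by
  have hsum := hasSum_log_sub_log_of_abs_lt_one (abs_lt.2 ⟨by linarith, hx1⟩)
  rw [log_div (by linarith) (by linarith)]
  simpa using le_hasSum hsum 0 fun k _ => by positivity

theorem g_nonpos (z : ℝ) (hz : 1/2 ≤ z) (hz1 : z < 1) :
    2*z - 1 - 2*(1 - 3*z + 3*z^2) * Real.log (z/(1-z)) ≤ 0 := by
  set t := 2*z - 1 with ht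
  have hz_div : z / (1 - z) = (1 + t) / (1 - t) := by
    rw [ht, div_eq_div_iff (by linarith) (by linarith)]; ring
  have hlog : 2 * t ≤ log (z / (1 - z)) :=
    hz_div ▸ two_mul_le_log_one_add_div_one_sub (by linarith) (by linarith)
  have hq : 1 - 3*z + 3*z^2 = (1 + 3*t^2) / 4 := by rw [ht]; ring
  rw [hq]
  have ht0 : 0 ≤ t := by linarith
  nlinarith [mul_le_mul_of_nonneg_left hlog (by positivity : (0:ℝ) ≤ (1 + 3*t^2) / 4),
    pow_nonneg ht0 3]
end

section
/- For all z in (1/2, 1), the function z ↦ z²(1-z)²·log(z/(1-z))/(2z-1) has nonpositive derivative; i.e., the ratio h'(z)/h'''(z) of first and third derivatives of the binary entropy function is nonincreasing on (1/2, 1). -/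
/-!
The derivative equals `z (1 - z) ((2z - 1) - 2 (3z² - 3z + 1) log (z / (1 - z))) / (2z - 1)²`.
Since `log (z / (1 - z)) = log (1 + t) - log (1 - t)` with `t = 2z - 1`, its power series
`2t + 2t³/3 + …` has nonnegative terms on `[0, 1)`, so it is at least `2t`; together with
`3z² - 3z + 1 ≥ 1/4` this makes the bracket nonpositive.
-/

open Real

noncomputable def entropyDerivRatio (x : ℝ) : ℝ :=
  x ^ 2 * (1 - x) ^ 2 * log (x / (1 - x)) / (2 * x - 1)

theorem two_mul_le_log_one_add_sub_log_one_sub {t : ℝ} (ht0 : 0 ≤ t) (ht1 : t < 1) :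
    2 * t ≤ log (1 + t) - log (1 - t) := by
  have hsum := hasSum_log_sub_log_of_abs_lt_one (abs_lt.2 ⟨by linarith, ht1⟩)
  simpa using le_hasSum hsum 0 fun k _ => by positivity

theorem two_mul_two_mul_sub_one_le_log_div_one_sub {z : ℝ} (hz : 1 / 2 ≤ z) (hz1 : z < 1) :
    2 * (2 * z - 1) ≤ log (z / (1 - z)) := by
  have h := two_mul_le_log_one_add_sub_log_one_sub (t := 2 * z - 1) (by linarith) (by linarith)
  rwa [← log_div (by linarith) (by linarith), show 1 + (2 * z - 1) = 2 * z by ring,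
    show 1 - (2 * z - 1) = 2 * (1 - z) by ring, mul_div_mul_left _ _ two_ne_zero] at h

theorem hasDerivAt_log_div_one_sub {z : ℝ} (hz0 : z ≠ 0) (hz1 : z ≠ 1) :
    HasDerivAt (fun x => log (x / (1 - x))) (1 / (z * (1 - z))) z := by
  have h1z : 1 - z ≠ 0 := sub_ne_zero.2 hz1.symm
  have hdiv : HasDerivAt (fun x => x / (1 - x)) _ z :=
    (hasDerivAt_id' z).div ((hasDerivAt_id' z).const_sub 1) h1z
  refine (hdiv.log (div_ne_zero hz0 h1z)).congr_deriv ?_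
  field_simp
  ring

theorem hasDerivAt_entropyDerivRatio {z : ℝ} (hz0 : z ≠ 0) (hz1 : z ≠ 1) (hz : 2 * z - 1 ≠ 0) :
    HasDerivAt entropyDerivRatio
      (z * (1 - z) * ((2 * z - 1) - 2 * (3 * z ^ 2 - 3 * z + 1) * log (z / (1 - z)))
        / (2 * z - 1) ^ 2) z := by
  have hpoly : HasDerivAt (fun x : ℝ => x ^ 2 * (1 - x) ^ 2) _ z :=
    (hasDerivAt_pow 2 z).mul (((hasDerivAt_id' z).const_sub 1).pow 2)
  have hnum : HasDerivAt (fun x : ℝ => x ^ 2 * (1 - x) ^ 2 * log (x / (1 - x))) _ z :=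
    hpoly.mul (hasDerivAt_log_div_one_sub hz0 hz1)
  have hden : HasDerivAt (fun x : ℝ => 2 * x - 1) _ z :=
    ((hasDerivAt_id' z).const_mul 2).sub_const 1
  refine (hnum.div hden hz).congr_deriv ?_
  have h1z : 1 - z ≠ 0 := sub_ne_zero.2 hz1.symm
  field_simp
  ring

theorem ratio_deriv_nonpos (z : ℝ) (hz : 1/2 < z) (hz1 : z < 1) :
    deriv (fun x : ℝ => x^2 * (1-x)^2 * Real.log (x/(1-x)) / (2*x - 1)) z ≤ 0 := by
  change deriv entropyDerivRatio z ≤ 0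
  rw [(hasDerivAt_entropyDerivRatio (by linarith) (by linarith) (by linarith)).deriv]
  have hlog := two_mul_two_mul_sub_one_le_log_div_one_sub hz.le hz1
  have hbracket : (2 * z - 1) - 2 * (3 * z ^ 2 - 3 * z + 1) * log (z / (1 - z)) ≤ 0 := by
    nlinarith [sq_nonneg (2 * z - 1)]
  exact div_nonpos_of_nonpos_of_nonneg
    (mul_nonpos_of_nonneg_of_nonpos (by nlinarith) hbracket) (sq_nonneg _)
end

section
/- For all q in (1/2, 1) and all z in [1/2, q], the function f(x) = -h'''(q)·h(x) + h'(q)·h''(x) has nonpositive derivative at every point of [1/2, q]; consequently f(z) ≥ f(q). -/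
/-! Write `logit x = log x - log (1 - x) = -h' x`. The derivative of `f` is
`-h''' q * h' x + h' q * h''' x`, and since `h'` and `h'''` are negative on `(1/2, 1)`, `f' ≤ 0`
on `[1/2, q]` says exactly that the ratio `h' / h'''` is antitone on `(1/2, 1)`. The derivative of
that ratio has the sign of `(2x - 1) - 2 (3x² - 3x + 1) logit x`, which is nonpositive because
`logit x ≥ 2 (2x - 1)`, the first term of the power series of `log (1 + s) - log (1 - s)` at
`s = 2x - 1`. -/

noncomputable def h (x : ℝ) : ℝ := -x * Real.log x - (1-x) * Real.log (1-x)

open Real Set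

lemma Convex.antitoneOn_of_hasDerivAt_nonpos {D : Set ℝ} (hD : Convex ℝ D) {f f' : ℝ → ℝ}
    (hf : ∀ x ∈ D, HasDerivAt f (f' x) x) (hf' : ∀ x ∈ interior D, f' x ≤ 0) :
    AntitoneOn f D :=
  antitoneOn_of_hasDerivWithinAt_nonpos hD (fun x hx => (hf x hx).continuousAt.continuousWithinAt)
    (fun x hx => (hf x (interior_subset hx)).hasDerivWithinAt) hf'

lemma h_eq_binEntropy : h = binEntropy := by
  funext x
  simp only [h, binEntropy, log_inv]
  ring

noncomputable def logit (t : ℝ) : ℝ := log t - log (1 - t)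

lemma hasDerivAt_h {x : ℝ} (hx0 : x ≠ 0) (hx1 : x ≠ 1) : HasDerivAt h (-logit x) x := by
  rw [h_eq_binEntropy, logit, neg_sub]
  exact hasDerivAt_binEntropy hx0 hx1

lemma hasDerivAt_logit {x : ℝ} (hx0 : x ≠ 0) (hx1 : x ≠ 1) :
    HasDerivAt logit (1 / (x * (1 - x))) x := by
  have hx1' : 1 - x ≠ 0 := sub_ne_zero.2 hx1.symm
  refine ((hasDerivAt_log hx0).sub
    ((hasDerivAt_log hx1').comp x ((hasDerivAt_id' x).const_sub 1))).congr_deriv ?_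
  field_simp
  ring

lemma two_mul_le_logit {t : ℝ} (ht0 : 1 / 2 ≤ t) (ht1 : t < 1) : 2 * (2 * t - 1) ≤ logit t := by
  have hs0 : 0 ≤ 2 * t - 1 := by linarith
  have hsum := hasSum_log_sub_log_of_abs_lt_one (abs_lt.2 ⟨by linarith, by linarith⟩ :
    |2 * t - 1| < 1)
  have hlogit : log (1 + (2 * t - 1)) - log (1 - (2 * t - 1)) = logit t := by
    rw [show 1 + (2 * t - 1) = 2 * t by ring, show 1 - (2 * t - 1) = 2 * (1 - t) by ring,
      log_mul two_ne_zero (by linarith), log_mul two_ne_zero (by linarith), logit]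
    ring
  rw [hlogit] at hsum
  simpa using le_hasSum hsum 0 fun k _ => by positivity

lemma hasDerivAt_mul_one_sub (x : ℝ) : HasDerivAt (fun t => t * (1 - t)) (1 - 2 * x) x :=
  ((hasDerivAt_id' x).mul ((hasDerivAt_id' x).const_sub 1)).congr_deriv (by ring)

lemma hasDerivAt_neg_one_div_mul_one_sub {x : ℝ} (hx0 : x ≠ 0) (hx1 : x ≠ 1) :
    HasDerivAt (fun t => -(1 / (t * (1 - t)))) (-(2 * x - 1) / (x * (1 - x)) ^ 2) x := by
  refine ((hasDerivAt_const x 1).div (hasDerivAt_mul_one_sub x)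
    (mul_ne_zero hx0 (sub_ne_zero.2 hx1.symm))).neg.congr_deriv ?_
  ring

/-- `h' t / h''' t`. -/
noncomputable def derivRatio (t : ℝ) : ℝ := logit t * ((t * (1 - t)) ^ 2 / (2 * t - 1))

lemma hasDerivAt_derivRatio {x : ℝ} (hx0 : x ≠ 0) (hx1 : x ≠ 1) (hx : 2 * x - 1 ≠ 0) :
    HasDerivAt derivRatio
      (x * (1 - x) * ((2 * x - 1) - 2 * (3 * x ^ 2 - 3 * x + 1) * logit x) / (2 * x - 1) ^ 2) x := by
  have hg : HasDerivAt (fun t => (t * (1 - t)) ^ 2 / (2 * t - 1))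
      ((2 * (x * (1 - x)) * (1 - 2 * x) * (2 * x - 1) - (x * (1 - x)) ^ 2 * 2) / (2 * x - 1) ^ 2)
      x := by
    refine (((hasDerivAt_mul_one_sub x).fun_pow 2).div
      (((hasDerivAt_id' x).const_mul 2).sub_const 1) hx).congr_deriv ?_
    ring
  refine ((hasDerivAt_logit hx0 hx1).mul hg).congr_deriv ?_
  field_simp
  ring

lemma antitoneOn_derivRatio : AntitoneOn derivRatio (Ioo (1 / 2) 1) := by
  refine (convex_Ioo _ _).antitoneOn_of_hasDerivAt_nonpos (fun x hx =>
    hasDerivAt_derivRatio (by linarith [hx.1]) (by linarith [hx.2]) (by linarith [hx.1]))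
    fun x hx => ?_
  rw [interior_Ioo] at hx
  obtain ⟨hx0, hx1⟩ := hx
  have hlogit := mul_le_mul_of_nonneg_left (two_mul_le_logit hx0.le hx1)
    (by nlinarith : 0 ≤ 2 * (3 * x ^ 2 - 3 * x + 1))
  refine div_nonpos_of_nonpos_of_nonneg
    (mul_nonpos_of_nonneg_of_nonpos (by nlinarith) ?_) (sq_nonneg _)
  nlinarith [pow_pos (by linarith : 0 < 2 * x - 1) 3]

lemma logit_mul_div_le {q x : ℝ} (hq : q < 1) (hx : 1 / 2 ≤ x) (hxq : x ≤ q) :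
    logit q * ((2 * x - 1) / (x * (1 - x)) ^ 2) ≤ (2 * q - 1) / (q * (1 - q)) ^ 2 * logit x := by
  rcases hx.eq_or_lt with rfl | hx
  · norm_num [logit]
  have ha : 0 < (2 * x - 1) / (x * (1 - x)) ^ 2 :=
    div_pos (by linarith) (pow_pos (mul_pos (by linarith) (by linarith)) 2)
  have hb : 0 < (2 * q - 1) / (q * (1 - q)) ^ 2 :=
    div_pos (by linarith) (pow_pos (mul_pos (by linarith) (by linarith)) 2)
  have hW := antitoneOn_derivRatio ⟨hx, hxq.trans_lt hq⟩ ⟨hx.trans_le hxq, hq⟩ hxq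
  rw [derivRatio, derivRatio, ← mul_div_assoc, ← mul_div_assoc, ← div_div_eq_mul_div,
    ← div_div_eq_mul_div, div_le_div_iff₀ hb ha] at hW
  linarith

noncomputable def f (q t : ℝ) : ℝ :=
  -(-(2*q-1)/(q^2*(1-q)^2)) * h t + (-Real.log (q/(1-q))) * (-(1/(t*(1-t))))

lemma hasDerivAt_f {q x : ℝ} (hq0 : q ≠ 0) (hq1 : q ≠ 1) (hx0 : x ≠ 0) (hx1 : x ≠ 1) :
    HasDerivAt (f q)
      (logit q * ((2 * x - 1) / (x * (1 - x)) ^ 2) - (2 * q - 1) / (q * (1 - q)) ^ 2 * logit x)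
      x := by
  refine (((hasDerivAt_h hx0 hx1).const_mul _).add
    ((hasDerivAt_neg_one_div_mul_one_sub hx0 hx1).const_mul _)).congr_deriv ?_
  simp only [log_div hq0 (sub_ne_zero.2 hq1.symm), logit]
  ring

theorem f_deriv_nonpos_general (q : ℝ) (hq1 : q < 1) (z : ℝ)
    (hz : 1/2 ≤ z) (hzq : z ≤ q) :
    (∀ x ∈ Set.Icc (1/2 : ℝ) q,
      deriv (fun t : ℝ => -(-(2*q-1)/(q^2*(1-q)^2)) * h t
          + (-Real.log (q/(1-q))) * (-(1/(t*(1-t))))) x ≤ 0) ∧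
    (-(-(2*q-1)/(q^2*(1-q)^2)) * h z + (-Real.log (q/(1-q))) * (-(1/(z*(1-z))))
      ≥ -(-(2*q-1)/(q^2*(1-q)^2)) * h q + (-Real.log (q/(1-q))) * (-(1/(q*(1-q))))) := by
  have hf' : ∀ x ∈ Icc (1 / 2 : ℝ) q, HasDerivAt (f q)
      (logit q * ((2 * x - 1) / (x * (1 - x)) ^ 2) - (2 * q - 1) / (q * (1 - q)) ^ 2 * logit x)
      x := fun x hx =>
    hasDerivAt_f (by linarith [hx.1, hx.2]) hq1.ne (by linarith [hx.1]) (by linarith [hx.2])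
  have hf'_nonpos : ∀ x ∈ Icc (1 / 2 : ℝ) q,
      logit q * ((2 * x - 1) / (x * (1 - x)) ^ 2) - (2 * q - 1) / (q * (1 - q)) ^ 2 * logit x
        ≤ 0 :=
    fun x hx => sub_nonpos.2 (logit_mul_div_le hq1 hx.1 hx.2)
  refine ⟨fun x hx => (hf' x hx).deriv ▸ hf'_nonpos x hx, ?_⟩
  exact (convex_Icc _ _).antitoneOn_of_hasDerivAt_nonpos hf'
    (fun x hx => hf'_nonpos x (interior_subset hx)) ⟨hz, hzq⟩ ⟨hz.trans hzq, le_rfl⟩ hzq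

theorem f_deriv_nonpos (q : ℝ) (hq : 1/2 < q) (hq1 : q < 1) (z : ℝ)
    (hz : 1/2 ≤ z) (hzq : z ≤ q) :
    (∀ x ∈ Set.Icc (1/2 : ℝ) q,
      deriv (fun t : ℝ => -(-(2*q-1)/(q^2*(1-q)^2)) * h t
          + (-Real.log (q/(1-q))) * (-(1/(t*(1-t))))) x ≤ 0) ∧
    (-(-(2*q-1)/(q^2*(1-q)^2)) * h z + (-Real.log (q/(1-q))) * (-(1/(z*(1-z))))
      ≥ -(-(2*q-1)/(q^2*(1-q)^2)) * h q + (-Real.log (q/(1-q))) * (-(1/(q*(1-q))))) :=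
  f_deriv_nonpos_general q hq1 z hz hzq
end

section
/- In the Glosten-Milgrom model, the expected one-step payoff of the informed trader equals (1-ν)/2 times the bid-ask spread: ν·(b(1-θ) + (1-a)θ) = ((1-ν)/2)·(a - b), where b = (1-ν)θ/((1-ν)θ + (1+ν)(1-θ)) and a = (1+ν)θ/((1+ν)θ + (1-ν)(1-θ)), for ν ∈ (0,1) and θ ∈ (0,1). -/
/-!
Write `D₁ = (1-ν)θ + (1+ν)(1-θ)` and `D₂ = (1+ν)θ + (1-ν)(1-θ)` for the denominators of the bid
and the ask. Since `1 - a = (1-ν)(1-θ)/D₂` and `D₁ + D₂ = 2`, the bracket in the payoff is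
`2(1-ν)θ(1-θ)/(D₁D₂)`; since `(1+ν)D₁ - (1-ν)D₂ = 4ν(1-θ)`, the spread is `4νθ(1-θ)/(D₁D₂)`.
Both sides of the identity are therefore `2ν(1-ν)θ(1-θ)/(D₁D₂)`.
-/

namespace GlostenMilgrom

noncomputable def bid (ν θ : ℝ) : ℝ := (1-ν)*θ/((1-ν)*θ + (1+ν)*(1-θ))

noncomputable def ask (ν θ : ℝ) : ℝ := (1+ν)*θ/((1+ν)*θ + (1-ν)*(1-θ))

variable {ν θ : ℝ}

theorem one_sub_ask (ha : (1+ν)*θ + (1-ν)*(1-θ) ≠ 0) :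
    1 - ask ν θ = (1-ν)*(1-θ) / ((1+ν)*θ + (1-ν)*(1-θ)) := by
  rw [ask, one_sub_div ha]
  ring

theorem bid_mul_add_one_sub_ask_mul (hb : (1-ν)*θ + (1+ν)*(1-θ) ≠ 0)
    (ha : (1+ν)*θ + (1-ν)*(1-θ) ≠ 0) :
    bid ν θ * (1-θ) + (1 - ask ν θ) * θ
      = 2*(1-ν)*θ*(1-θ) / (((1-ν)*θ + (1+ν)*(1-θ)) * ((1+ν)*θ + (1-ν)*(1-θ))) := by
  rw [one_sub_ask ha, bid, div_mul_eq_mul_div, div_mul_eq_mul_div, div_add_div _ _ hb ha]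
  ring

theorem ask_sub_bid (hb : (1-ν)*θ + (1+ν)*(1-θ) ≠ 0) (ha : (1+ν)*θ + (1-ν)*(1-θ) ≠ 0) :
    ask ν θ - bid ν θ
      = 4*ν*θ*(1-θ) / (((1-ν)*θ + (1+ν)*(1-θ)) * ((1+ν)*θ + (1-ν)*(1-θ))) := by
  rw [ask, bid, div_sub_div _ _ ha hb]
  ring

end GlostenMilgrom

theorem payoff_eq_half_spread (ν θ : ℝ) (hν : 0 < ν) (hν1 : ν < 1)
    (hθ0 : 0 < θ) (hθ1 : θ < 1) :
    ν * (((1-ν)*θ/((1-ν)*θ + (1+ν)*(1-θ))) * (1-θ)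
        + (1 - (1+ν)*θ/((1+ν)*θ + (1-ν)*(1-θ))) * θ)
    = ((1-ν)/2) * ((1+ν)*θ/((1+ν)*θ + (1-ν)*(1-θ))
        - (1-ν)*θ/((1-ν)*θ + (1+ν)*(1-θ))) := by
  have hb : 0 < (1-ν)*θ + (1+ν)*(1-θ) := by nlinarith
  have ha : 0 < (1+ν)*θ + (1-ν)*(1-θ) := by nlinarith
  change ν * (GlostenMilgrom.bid ν θ * (1-θ) + (1 - GlostenMilgrom.ask ν θ) * θ)
    = (1-ν)/2 * (GlostenMilgrom.ask ν θ - GlostenMilgrom.bid ν θ)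
  rw [GlostenMilgrom.bid_mul_add_one_sub_ask_mul hb.ne' ha.ne',
    GlostenMilgrom.ask_sub_bid hb.ne' ha.ne']
  ring
end

section
/- For ν ∈ (0,1), θ ∈ (0,1), let q = (1+ν)/2, z = qθ + (1-q)(1-θ), T = (q·log(q/(1-q)))⁻¹. Then the one-step bound ν·(b(1-θ) + (1-a)θ) ≤ T·(h(z) - h(q)) holds, where b = (1-ν)θ/((1-ν)θ + (1+ν)(1-θ)), a = (1+ν)θ/((1+ν)θ + (1-ν)(1-θ)), and h is the binary entropy function. -/
open Real Set

theorem two_mul_le_log_one_add_sub_log_one_sub_s17 {u : ℝ} (hu₀ : 0 ≤ u) (hu₁ : u < 1) :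
    2 * u ≤ log (1 + u) - log (1 - u) := by
  have hs := hasSum_log_sub_log_of_abs_lt_one (abs_lt.2 ⟨by linarith, hu₁⟩)
  simpa using le_hasSum hs 0 fun k _ ↦ by positivity

theorem two_mul_two_mul_sub_one_le_log_sub_log {z : ℝ} (hz₀ : 1 / 2 ≤ z) (hz₁ : z < 1) :
    2 * (2 * z - 1) ≤ log z - log (1 - z) := by
  have := two_mul_le_log_one_add_sub_log_one_sub_s17 (u := 2 * z - 1) (by linarith) (by linarith)
  rwa [show 1 + (2 * z - 1) = 2 * z by ring, show 1 - (2 * z - 1) = 2 * (1 - z) by ring,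
    log_mul two_ne_zero (by linarith), log_mul two_ne_zero (by linarith), add_sub_add_left_eq_sub]
    at this

noncomputable def comparisonCoeff (z : ℝ) : ℝ :=
  (log z - log (1 - z)) * (z * (1 - z)) ^ 2 / (2 * z - 1)

theorem hasDerivAt_comparisonCoeff {z : ℝ} (hz₀ : 0 < z) (hz₁ : z < 1) (hz : 2 * z - 1 ≠ 0) :
    HasDerivAt comparisonCoeff
      (z * (1 - z) * ((2 * z - 1) - 2 * (log z - log (1 - z)) * (1 - 3 * (z * (1 - z))))
        / (2 * z - 1) ^ 2) z := by
  have h1z : 1 - z ≠ 0 := by linarith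
  have hlog := (hasDerivAt_log hz₀.ne').fun_sub (((hasDerivAt_id' z).const_sub 1).log h1z)
  have hsq := ((hasDerivAt_id' z).fun_mul ((hasDerivAt_id' z).const_sub 1)).fun_pow 2
  have hden := ((hasDerivAt_id' z).const_mul 2).sub_const 1
  refine ((hlog.fun_mul hsq).fun_div hden hz).congr_deriv ?_
  field_simp
  ring

theorem comparisonCoeff_antitoneOn : AntitoneOn comparisonCoeff (Ioo (1 / 2) 1) := by
  have hderiv : ∀ z ∈ Ioo (1 / 2 : ℝ) 1, HasDerivAt comparisonCoeff
      (z * (1 - z) * ((2 * z - 1) - 2 * (log z - log (1 - z)) * (1 - 3 * (z * (1 - z))))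
        / (2 * z - 1) ^ 2) z :=
    fun z hz ↦ hasDerivAt_comparisonCoeff (by linarith [hz.1]) hz.2 (by linarith [hz.1])
  refine antitoneOn_of_hasDerivWithinAt_nonpos (convex_Ioo _ _)
    (fun z hz ↦ (hderiv z hz).continuousAt.continuousWithinAt)
    (fun z hz ↦ (hderiv z (interior_subset hz)).hasDerivWithinAt) fun z hz ↦ ?_
  obtain ⟨hz₀, hz₁⟩ := interior_subset hz
  have hlog := two_mul_two_mul_sub_one_le_log_sub_log hz₀.le hz₁
  have hvar : z * (1 - z) ≤ 1 / 4 := by nlinarith [sq_nonneg (2 * z - 1)]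
  refine div_nonpos_of_nonpos_of_nonneg (mul_nonpos_of_nonneg_of_nonpos ?_ ?_) (sq_nonneg _)
  · nlinarith
  · nlinarith

theorem antitoneOn_binEntropy_add_div {q : ℝ} (hq₀ : 1 / 2 < q) (hq₁ : q < 1) :
    AntitoneOn (fun z ↦ binEntropy z + comparisonCoeff q / (z * (1 - z))) (Icc (1 / 2) q) := by
  have hderiv : ∀ z ∈ Icc (1 / 2 : ℝ) q, HasDerivAt
      (fun z ↦ binEntropy z + comparisonCoeff q / (z * (1 - z)))
      (log (1 - z) - log z + comparisonCoeff q * (2 * z - 1) / (z * (1 - z)) ^ 2) z := by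
    intro z hz
    have hz₀ : 0 < z := by linarith [hz.1]
    have hz₁ : 0 < 1 - z := by linarith [hz.2]
    refine ((hasDerivAt_binEntropy hz₀.ne' (by linarith)).add
      ((hasDerivAt_const z (comparisonCoeff q)).fun_div
        ((hasDerivAt_id' z).fun_mul ((hasDerivAt_id' z).const_sub 1))
        (mul_pos hz₀ hz₁).ne')).congr_deriv ?_
    ring
  refine antitoneOn_of_hasDerivWithinAt_nonpos (convex_Icc _ _)
    (fun z hz ↦ (hderiv z hz).continuousAt.continuousWithinAt)
    (fun z hz ↦ (hderiv z (interior_subset hz)).hasDerivWithinAt) fun z hz ↦ ?_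
  rw [interior_Icc] at hz
  obtain ⟨hz₀, hzq⟩ := hz
  have hvar : 0 < z * (1 - z) := mul_pos (by linarith) (by linarith)
  have hcoeff : comparisonCoeff q ≤ comparisonCoeff z :=
    comparisonCoeff_antitoneOn ⟨hz₀, by linarith⟩ ⟨hq₀, hq₁⟩ hzq.le
  have hslope : comparisonCoeff z * (2 * z - 1) / (z * (1 - z)) ^ 2 = log z - log (1 - z) := by
    have h2z : 2 * z - 1 ≠ 0 := by linarith
    rw [comparisonCoeff, div_mul_cancel₀ _ h2z, mul_div_cancel_right₀ _ (pow_ne_zero 2 hvar.ne')]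
  have hle : comparisonCoeff q * (2 * z - 1) / (z * (1 - z)) ^ 2 ≤ log z - log (1 - z) := by
    rw [← hslope]
    gcongr
    linarith
  linarith

theorem comparisonCoeff_mul_le_binEntropy_sub {q z : ℝ} (hq₀ : 1 / 2 < q) (hq₁ : q < 1)
    (hz₀ : 1 - q ≤ z) (hz₁ : z ≤ q) :
    comparisonCoeff q * ((q * (1 - q))⁻¹ - (z * (1 - z))⁻¹) ≤ binEntropy z - binEntropy q := by
  wlog hz : 1 / 2 ≤ z generalizing z
  · simpa [mul_comm] using this (z := 1 - z) (by linarith) (by linarith) (by linarith)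
  have hanti := antitoneOn_binEntropy_add_div hq₀ hq₁ ⟨hz, hz₁⟩ ⟨hq₀.le, le_rfl⟩ hz₁
  simp only [div_eq_mul_inv] at hanti
  linarith [mul_sub (comparisonCoeff q) (q * (1 - q))⁻¹ (z * (1 - z))⁻¹]

theorem one_step_bound (ν θ : ℝ) (hν : 0 < ν) (hν1 : ν < 1)
    (hθ0 : 0 < θ) (hθ1 : θ < 1) :
    ν * (((1-ν)*θ/((1-ν)*θ + (1+ν)*(1-θ))) * (1-θ)
        + (1 - (1+ν)*θ/((1+ν)*θ + (1-ν)*(1-θ))) * θ)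
    ≤ (((1+ν)/2) * Real.log (((1+ν)/2)/(1-(1+ν)/2)))⁻¹ *
        (h (((1+ν)/2)*θ + (1-(1+ν)/2)*(1-θ)) - h ((1+ν)/2)) := by
  obtain ⟨q, rfl⟩ : ∃ q, ν = 2 * q - 1 := ⟨(1 + ν) / 2, by ring⟩
  rw [show (1 + (2 * q - 1)) / 2 = q by ring, show 1 - (2 * q - 1) = 2 * (1 - q) by ring,
    show 1 + (2 * q - 1) = 2 * q by ring, h_eq_binEntropy]
  set z := q * θ + (1 - q) * (1 - θ) with hz
  have hz₀ : 1 - q ≤ z := by nlinarith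
  have hz₁ : z ≤ q := by nlinarith
  have hz₀' : z ≠ 0 := by linarith
  have hz₁' : 1 - z ≠ 0 := by linarith
  have hq₀ : q ≠ 0 := by linarith
  have hq₁ : 1 - q ≠ 0 := by linarith
  have hlog : 0 < log (q / (1 - q)) := log_pos ((one_lt_div (by linarith)).2 (by linarith))
  have hvar : z * (1 - z) - q * (1 - q) = (2 * q - 1) ^ 2 * (θ * (1 - θ)) := by rw [hz]; ring
  rw [show 2 * (1 - q) * θ + 2 * q * (1 - θ) = 2 * (1 - z) by ring,
    show 2 * q * θ + 2 * (1 - q) * (1 - θ) = 2 * z by ring]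
  calc _ = (1 - q) * (2 * q - 1) * (θ * (1 - θ)) / (z * (1 - z)) := by
        field_simp
        rw [hz]
        ring
    _ = (q * log (q / (1 - q)))⁻¹ *
          (comparisonCoeff q * ((q * (1 - q))⁻¹ - (z * (1 - z))⁻¹)) := by
        rw [comparisonCoeff, ← log_div hq₀ hq₁,
          inv_sub_inv (mul_ne_zero hq₀ hq₁) (mul_ne_zero hz₀' hz₁'), hvar]
        field_simp
    _ ≤ _ := by
        refine mul_le_mul_of_nonneg_left ?_ (inv_nonneg.2 (mul_pos (by linarith) hlog).le)
        exact comparisonCoeff_mul_le_binEntropy_sub (by linarith) (by linarith) hz₀ hz₁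
end
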